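/- For every k > 0 there exist radii 0 < R₁ < R₂ < R₃ and a nonzero smooth solution v of the Helmholtz equation Δv + k²v = 0 in B_{R₃} ⊂ ℝ² such that v vanishes identically on the circle ∂B_{R₁} but does not vanish identically on the circle ∂B_{R₂}. Consequently, for the Helmholtz equation, the three spheres inequalities ‖v‖_{L^∞(∂B_{R₂})} ≤ C‖v‖^α_{L^∞(∂B_{R₁})}‖v‖^{1-α}_{L^∞(∂B_{R₃})} and ‖v‖_{L²(∂B_{R₂})} ≤ C‖v‖^α_{L²(∂B_{R₁})}‖v‖^{1-α}_{L²(∂B_{R₃})} (with α ∈ (0,1)) cannot hold for all choices of 0 < R₁ < R₂ < R₃. -/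

import Mathlib

open MeasureTheory Metric
open scoped ENNReal

noncomputable section

/-- Euclidean space `ℝ^d`. -/
abbrev Euc (d : ℕ) := EuclideanSpace ℝ (Fin d)

/-- Partial derivative `∂f/∂xᵢ` (junk value `0` when not differentiable). -/
def pdR (d : ℕ) (i : Fin d) (f : Euc d → ℝ) (x : Euc d) : ℝ :=
  fderiv ℝ f x (EuclideanSpace.single i 1)

/-- The Laplacian `Δf = ∑ᵢ ∂²f/∂xᵢ²`. -/
def lapl (d : ℕ) (f : Euc d → ℝ) (x : Euc d) : ℝ :=
  ∑ i, pdR d i (pdR d i f) x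

/-- Surface measure (1-dimensional Hausdorff measure in the plane). -/
def surf2 : Measure (Euc 2) := μH[(1 : ℝ)]

/-- The `L^∞`-norm of `v` on the circle `∂B_R`. -/
def supNorm (R : ℝ) (v : Euc 2 → ℝ) : ℝ :=
  sSup ((fun x => |v x|) '' sphere (0 : Euc 2) R)

/-- The `L²`-norm of `v` on the circle `∂B_R`. -/
def l2Norm (R : ℝ) (v : Euc 2 → ℝ) : ℝ :=
  Real.sqrt (∫ x in sphere (0 : Euc 2) R, (v x) ^ 2 ∂surf2)

namespace Stmt10Aux

open Filter
open scoped NNReal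

/-! ### The Bessel-type power series `f(u) = J₀(2√u) = ∑ (-1)^m u^m / (4^m (m!)²)` -/

def a (m : ℕ) : ℝ := (-1) ^ m / ((m.factorial : ℝ) ^ 2 * 4 ^ m)

def da (b : ℕ → ℝ) (m : ℕ) : ℝ := ((m : ℝ) + 1) * b (m + 1)

def F (b : ℕ → ℝ) (u : ℝ) : ℝ := ∑' m, b m * u ^ m

lemma factR_pos (m : ℕ) : (0 : ℝ) < m.factorial := by exact_mod_cast m.factorial_pos

lemma abs_a (m : ℕ) : |a m| = 1 / ((m.factorial : ℝ) ^ 2 * 4 ^ m) := by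
  have h : (0:ℝ) < (m.factorial : ℝ) ^ 2 * 4 ^ m := by positivity
  rw [a, abs_div, abs_pow, abs_neg, abs_one, one_pow, abs_of_pos h]

def Adm (b : ℕ → ℝ) : Prop := ∀ m, |b m| ≤ 1 / (m.factorial : ℝ)

lemma adm_a : Adm a := by
  intro m
  rw [abs_a]
  have h1 : (1:ℝ) ≤ (m.factorial:ℝ) := by exact_mod_cast m.factorial_pos
  have h2 : (1:ℝ) ≤ (4:ℝ) ^ m := one_le_pow₀ (by norm_num)
  apply one_div_le_one_div_of_le (factR_pos m)
  nlinarith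

lemma adm_da {b : ℕ → ℝ} (hb : Adm b) : Adm (da b) := by
  intro m
  have h2 : (0:ℝ) ≤ (m:ℝ) + 1 := by positivity
  have h3 : |da b m| ≤ ((m:ℝ)+1) * (1 / (((m+1).factorial : ℕ) : ℝ)) := by
    rw [da, abs_mul, abs_of_nonneg h2]
    exact mul_le_mul_of_nonneg_left (hb (m+1)) h2
  refine h3.trans (le_of_eq ?_)
  rw [Nat.factorial_succ]
  have h1 : ((m.factorial:ℕ):ℝ) ≠ 0 := (factR_pos m).ne'
  push_cast
  field_simp

lemma summable_bound (u : ℝ) {b : ℕ → ℝ} (hb : Adm b) :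
    Summable (fun m => b m * u ^ m) := by
  apply Summable.of_abs
  apply Summable.of_nonneg_of_le (fun m => abs_nonneg _) (fun m => ?_)
    (Real.summable_pow_div_factorial |u|)
  rw [abs_mul, abs_pow]
  calc |b m| * |u| ^ m ≤ (1 / (m.factorial : ℝ)) * |u| ^ m := by
        gcongr; exact hb m
    _ = |u| ^ m / (m.factorial : ℝ) := by ring

lemma deriv_term_bound {b : ℕ → ℝ} (hb : Adm b) {R : ℝ} (hR1 : 1 ≤ R) (m : ℕ) {y : ℝ}
    (hy : |y| ≤ R) : ‖b m * ((m:ℝ) * y ^ (m-1))‖ ≤ (2*R) ^ m / (m.factorial : ℝ) := by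
  have hy1 : |y| ^ (m-1) ≤ R ^ m := by
    calc |y| ^ (m-1) ≤ R ^ (m-1) := pow_le_pow_left₀ (abs_nonneg y) hy _
      _ ≤ R ^ m := pow_le_pow_right₀ hR1 (Nat.sub_le m 1)
  have hm : (m:ℝ) ≤ 2 ^ m := by exact_mod_cast (Nat.lt_two_pow_self (n := m)).le
  have h0 : (0:ℝ) < (m.factorial : ℝ) := factR_pos m
  calc ‖b m * ((m:ℝ) * y ^ (m-1))‖ = |b m| * ((m:ℝ) * |y| ^ (m-1)) := by
        rw [Real.norm_eq_abs, abs_mul, abs_mul, abs_pow, Nat.abs_cast]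
    _ ≤ (1 / (m.factorial : ℝ)) * ((2:ℝ) ^ m * R ^ m) := by
        apply mul_le_mul (hb m) ?_ (by positivity) (by positivity)
        exact mul_le_mul hm hy1 (by positivity) (by positivity)
    _ = (2*R) ^ m / (m.factorial : ℝ) := by rw [mul_pow]; ring

lemma hasDerivAt_F {b : ℕ → ℝ} (hb : Adm b) (u : ℝ) :
    HasDerivAt (F b) (F (da b) u) u := by
  classical
  set R : ℝ := |u| + 1 with hRdef
  have hR1 : 1 ≤ R := le_add_of_nonneg_left (abs_nonneg u)
  have hball : u ∈ ball (0:ℝ) R := by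
    simp [mem_ball_zero_iff, Real.norm_eq_abs, hRdef]
  have hsum2 : Summable (fun m => (2*R) ^ m / (m.factorial : ℝ)) :=
    Real.summable_pow_div_factorial (2*R)
  have key : HasDerivAt (fun y => ∑' m, b m * y ^ m)
      (∑' m, b m * ((m:ℝ) * u ^ (m-1))) u := by
    apply hasDerivAt_tsum_of_isPreconnected hsum2 isOpen_ball
      (convex_ball (0:ℝ) R).isPreconnected
      (g := fun m y => b m * y ^ m) (g' := fun m y => b m * ((m:ℝ) * y ^ (m-1)))
      (y₀ := 0) ?_ ?_ ?_ ?_ hball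
    · exact fun m y _ => (hasDerivAt_pow m y).const_mul (b m)
    · intro m y hy
      have hyR : |y| ≤ R := by
        have h5 := mem_ball_zero_iff.1 hy
        rw [Real.norm_eq_abs] at h5
        exact h5.le
      exact deriv_term_bound hb hR1 m hyR
    · simp [mem_ball_zero_iff]; linarith [abs_nonneg u]
    · exact summable_bound 0 hb
  have hsumd : Summable (fun m => b m * ((m:ℝ) * u ^ (m-1))) := by
    apply Summable.of_norm
    apply Summable.of_nonneg_of_le (fun m => norm_nonneg _)
      (fun m => deriv_term_bound hb hR1 m (le_add_of_nonneg_right zero_le_one)) hsum2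
  have heq : ∑' m, b m * ((m:ℝ) * u ^ (m-1)) = F (da b) u := by
    rw [Summable.tsum_eq_zero_add hsumd]
    simp only [Nat.cast_zero, zero_mul, mul_zero, zero_add]
    apply tsum_congr
    intro m
    rw [da]
    push_cast [Nat.add_sub_cancel]
    ring
  rw [← heq]
  exact key

/-! ### The ODE `4 u f'' + 4 f' + f = 0` -/

lemma rec_a (m : ℕ) : 4 * ((m:ℝ) + 1) * da a m = - a m := by
  have h1 : ((m.factorial : ℕ) : ℝ) ≠ 0 := (factR_pos m).ne'
  have h2 : ((m:ℝ) + 1) ≠ 0 := by positivity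
  have h4 : ((4:ℝ)) ^ m ≠ 0 := by positivity
  rw [da, a, a, Nat.factorial_succ]
  push_cast
  field_simp
  ring

lemma ode (u : ℝ) : 4 * u * F (da (da a)) u + 4 * F (da a) u + F a u = 0 := by
  have s0 : Summable (fun m => a m * u ^ m) := summable_bound u adm_a
  have s1 : Summable (fun m => da a m * u ^ m) := summable_bound u (adm_da adm_a)
  set G : ℕ → ℝ := fun m => 4 * (m:ℝ) * da a m * u ^ m with hG
  have sG : Summable G := by
    apply Summable.of_norm
    apply Summable.of_nonneg_of_le (fun m => norm_nonneg _) (fun m => ?_)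
      ((Real.summable_pow_div_factorial (2*|u|)).mul_left 4)
    have hda := adm_da adm_a m
    have hm : (m:ℝ) ≤ 2 ^ m := by exact_mod_cast (Nat.lt_two_pow_self (n := m)).le
    have h0 : (0:ℝ) < (m.factorial : ℝ) := factR_pos m
    calc ‖G m‖ = 4 * ((m:ℝ) * |da a m| * |u| ^ m) := by
          rw [hG, Real.norm_eq_abs]
          rw [abs_mul, abs_mul, abs_mul, abs_pow]
          simp [abs_of_nonneg, Nat.abs_cast]
          ring
      _ ≤ 4 * ((2:ℝ) ^ m * (1 / (m.factorial : ℝ)) * |u| ^ m) := by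
          gcongr
      _ = 4 * ((2*|u|) ^ m / (m.factorial : ℝ)) := by rw [mul_pow]; ring
  have e2 : ∑' m, G m = 4 * u * F (da (da a)) u := by
    rw [Summable.tsum_eq_zero_add sG]
    have hGz : G 0 = 0 := by simp [hG]
    rw [hGz, zero_add]
    have hsucc : ∀ m : ℕ, G (m+1) = (4*u) * (da (da a) m * u ^ m) := by
      intro m
      simp only [hG, da]
      push_cast
      ring
    rw [tsum_congr hsucc, tsum_mul_left]
    rfl
  have e1 : 4 * F (da a) u = ∑' m, 4 * (da a m * u ^ m) := by
    rw [tsum_mul_left]; rfl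
  have key : 4 * u * F (da (da a)) u + 4 * F (da a) u + F a u
      = ∑' m, (G m + 4 * (da a m * u ^ m) + a m * u ^ m) := by
    rw [← e2, e1, F]
    rw [Summable.tsum_add (sG.add (s1.mul_left 4)) s0, Summable.tsum_add sG (s1.mul_left 4)]
  rw [key]
  have hzero : ∀ m : ℕ, G m + 4 * (da a m * u ^ m) + a m * u ^ m = 0 := by
    intro m
    have h := rec_a m
    simp only [hG]
    linear_combination (u ^ m) * h
  rw [tsum_congr hzero]
  exact tsum_zero

/-! ### Values: `f(0) = 1` and `f(8) < 0` -/

lemma F_a_zero : F a 0 = 1 := by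
  rw [F, tsum_eq_single 0 (fun m hm => by rw [zero_pow hm, mul_zero])]
  simp [a]

lemma fact_ge (m : ℕ) : 720 * 7 ^ m ≤ (m + 6).factorial := by
  induction m with
  | zero => simp [Nat.factorial]
  | succ n ih =>
      have h1 : (n + 1 + 6).factorial = (n + 7) * (n + 6).factorial := by
        rw [show n + 1 + 6 = (n + 6) + 1 by ring, Nat.factorial_succ]
      calc 720 * 7 ^ (n+1) = 7 * (720 * 7 ^ n) := by ring
        _ ≤ 7 * (n + 6).factorial := by omega
        _ ≤ (n + 7) * (n + 6).factorial := Nat.mul_le_mul_right _ (by omega)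
        _ = (n + 1 + 6).factorial := h1.symm

lemma tail_bound (m : ℕ) : |a (m + 6) * 8 ^ (m + 6)| ≤ (1/8100) * (2/49) ^ m := by
  have hf : (720 * 7 ^ m : ℝ) ≤ ((m+6).factorial : ℝ) := by exact_mod_cast fact_ge m
  have hfp : (0:ℝ) < ((m+6).factorial : ℝ) := factR_pos (m+6)
  have h7 : (0:ℝ) < 720 * 7 ^ m := by positivity
  rw [abs_mul, abs_a, abs_pow]
  have e8 : |(8:ℝ)| ^ (m+6) = 8 ^ (m+6) := by norm_num
  rw [e8]
  rw [div_mul_eq_mul_div, one_mul]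
  rw [div_le_iff₀ (by positivity)]
  have key : ((m+6).factorial : ℝ)^2 ≥ (720 * 7 ^ m)^2 := by nlinarith
  calc (8:ℝ) ^ (m+6) = (1/8100) * (2/49)^m * ((720*7^m)^2 * 4^(m+6)) := by
        have h49 : ((7:ℝ)^m)^2 = 49^m := by
          rw [← pow_mul, mul_comm m 2, pow_mul]; norm_num
        have h8 : (8:ℝ)^m = 2^m * 4^m := by rw [← mul_pow]; norm_num
        have h249 : (2/49:ℝ)^m = 2^m / 49^m := div_pow 2 49 m
        have h49p : (0:ℝ) < (49:ℝ)^m := by positivity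
        rw [mul_pow, h49, pow_add, pow_add, h8, h249]
        field_simp
        ring
    _ ≤ (1/8100) * (2/49)^m * (((m+6).factorial : ℝ)^2 * 4^(m+6)) := by
        have hnn : (0:ℝ) ≤ (1/8100) * (2/49)^m := by positivity
        gcongr

lemma F_a_eight : F a 8 < 0 := by
  have hs : Summable (fun m => a m * (8:ℝ) ^ m) := summable_bound 8 adm_a
  have hpart : ∑ m ∈ Finset.range 6, a m * (8:ℝ) ^ m = -59/300 := by
    simp only [Finset.sum_range_succ, Finset.sum_range_zero, a]
    norm_num [Nat.factorial]
  have hsplit := Summable.sum_add_tsum_nat_add 6 hs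
  have htail : |∑' m, a (m + 6) * (8:ℝ) ^ (m + 6)| ≤ (1/8100) * (49/47) := by
    have hgeo : Summable (fun m : ℕ => (1/8100) * (2/49 : ℝ) ^ m) :=
      (summable_geometric_of_lt_one (by norm_num) (by norm_num)).mul_left _
    have hsum_abs : Summable (fun m => |a (m + 6) * (8:ℝ) ^ (m + 6)|) :=
      Summable.of_nonneg_of_le (fun m => abs_nonneg _) tail_bound hgeo
    calc |∑' m, a (m + 6) * (8:ℝ) ^ (m + 6)| ≤ ∑' m, |a (m + 6) * (8:ℝ) ^ (m + 6)| := by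
          have hnorm := norm_tsum_le_tsum_norm (f := fun m => a (m + 6) * (8:ℝ) ^ (m + 6))
            (by simp only [Real.norm_eq_abs]; exact hsum_abs)
          simp only [Real.norm_eq_abs] at hnorm
          exact hnorm
      _ ≤ ∑' m : ℕ, (1/8100) * (2/49 : ℝ) ^ m := Summable.tsum_le_tsum tail_bound hsum_abs hgeo
      _ = (1/8100) * (49/47) := by
          rw [tsum_mul_left, tsum_geometric_of_lt_one (by norm_num) (by norm_num)]
          norm_num
  have hFa8 : F a 8 = -59/300 + ∑' m, a (m + 6) * (8:ℝ) ^ (m + 6) := by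
    rw [F, ← hsplit, hpart]
  rw [hFa8]
  have h1 : ∑' m, a (m + 6) * (8:ℝ) ^ (m + 6) ≤ (1/8100) * (49/47) := by
    have h2 := abs_le.1 htail
    linarith [h2.2]
  linarith

/-! ### Analyticity / smoothness -/

lemma a_ne (m : ℕ) : a m ≠ 0 := by
  intro h
  have h1 := abs_a m
  rw [h, abs_zero] at h1
  have h2 : (0:ℝ) < 1 / ((m.factorial : ℝ) ^ 2 * 4 ^ m) := by positivity
  linarith [h1 ▸ h2]

lemma ratio_a (n : ℕ) : ‖a (n+1)‖ / ‖a n‖ = 1 / (4 * ((n:ℝ)+1)^2) := by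
  rw [Real.norm_eq_abs, Real.norm_eq_abs, abs_a, abs_a, Nat.factorial_succ]
  have h1 : ((n.factorial : ℕ) : ℝ) ≠ 0 := (factR_pos n).ne'
  have h2 : ((n:ℝ) + 1) ≠ 0 := by positivity
  have h4 : ((4:ℝ)) ^ n ≠ 0 := by positivity
  push_cast
  field_simp
  ring

lemma radius_top : (FormalMultilinearSeries.ofScalars ℝ a).radius = ⊤ := by
  apply FormalMultilinearSeries.ofScalars_radius_eq_top_of_tendsto ℝ a
    (Eventually.of_forall fun n => a_ne n)
  have h0 : Tendsto (fun n : ℕ => 1 / (4 * ((n:ℝ)+1)^2)) atTop (nhds 0) := by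
    apply squeeze_zero (fun n => by positivity) (g := fun n : ℕ => 1 / ((n:ℝ)+1))
    · intro n
      apply one_div_le_one_div_of_le (by positivity)
      nlinarith [sq_nonneg ((n:ℝ)+1), Nat.cast_nonneg (α := ℝ) n]
    · exact tendsto_one_div_add_atTop_nhds_zero_nat
  have heq : (fun n : ℕ => ‖a n.succ‖ / ‖a n‖) = fun n : ℕ => 1 / (4 * ((n:ℝ)+1)^2) := by
    funext n; exact ratio_a n
  rw [heq]
  exact h0

lemma analytic_F_a : AnalyticOnNhd ℝ (F a) Set.univ := by
  have h8 : F a = (FormalMultilinearSeries.ofScalars ℝ a).sum := by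
    funext u
    rw [F]
    have h9 := FormalMultilinearSeries.ofScalars_sum_eq (E := ℝ) a u
    rw [show (FormalMultilinearSeries.ofScalars ℝ a).sum u
        = FormalMultilinearSeries.ofScalarsSum a u from rfl, h9]
    simp [smul_eq_mul]
  intro x _
  have hball : HasFPowerSeriesOnBall (FormalMultilinearSeries.ofScalars ℝ a).sum
      (FormalMultilinearSeries.ofScalars ℝ a) 0 ⊤ := by
    rw [← radius_top]
    apply FormalMultilinearSeries.hasFPowerSeriesOnBall
    rw [radius_top]
    exact ENNReal.zero_lt_top
  rw [h8]
  exact hball.analyticAt_of_mem (by simp [edist_lt_top])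

lemma contDiff_F_a : ContDiff ℝ (⊤ : WithTop ℕ∞) (F a) := analytic_F_a.contDiff

/-! ### The radial solution `v(x) = f(k²|x|²)` of the Helmholtz equation -/

def q (k : ℝ) (x : Euc 2) : ℝ := k^2 * (x 0 * x 0 + x 1 * x 1)

def P (i : Fin 2) : Euc 2 →L[ℝ] ℝ := EuclideanSpace.proj i

def Lc (k : ℝ) (x : Euc 2) : Euc 2 →L[ℝ] ℝ :=
  k^2 • (((x 0) • P 0 + (x 0) • P 0) + ((x 1) • P 1 + (x 1) • P 1))

lemma hP (i : Fin 2) (x : Euc 2) : HasFDerivAt (fun y : Euc 2 => y i) (P i) x :=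
  (P i).hasFDerivAt

lemma hq (k : ℝ) (x : Euc 2) : HasFDerivAt (q k) (Lc k x) x :=
  (((hP 0 x).mul (hP 0 x)).add ((hP 1 x).mul (hP 1 x))).const_mul (k^2)

lemma Lc_app (k : ℝ) (x : Euc 2) (i : Fin 2) :
    Lc k x (EuclideanSpace.single i (1:ℝ)) = 2 * k^2 * x i := by
  fin_cases i <;>
    simp [Lc, P, EuclideanSpace.single_apply] <;> ring

def v (k : ℝ) (x : Euc 2) : ℝ := F a (q k x)

lemma hv (k : ℝ) (x : Euc 2) : HasFDerivAt (v k) (F (da a) (q k x) • Lc k x) x :=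
  (hasDerivAt_F adm_a (q k x)).comp_hasFDerivAt x (hq k x)

lemma pd_v (k : ℝ) (i : Fin 2) :
    pdR 2 i (v k) = fun x => F (da a) (q k x) * (2 * k^2 * x i) := by
  funext x
  rw [pdR, (hv k x).fderiv]
  simp [Lc_app]

lemma hw (k : ℝ) (i : Fin 2) (x : Euc 2) :
    HasFDerivAt (fun y => F (da a) (q k y) * (2 * k^2 * y i))
      ((F (da a) (q k x)) • ((2*k^2) • P i)
        + (2 * k^2 * x i) • (F (da (da a)) (q k x) • Lc k x)) x := by
  have h1 : HasFDerivAt (fun y => F (da a) (q k y)) (F (da (da a)) (q k x) • Lc k x) x :=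
    (hasDerivAt_F (adm_da adm_a) (q k x)).comp_hasFDerivAt x (hq k x)
  have h2 : HasFDerivAt (fun y : Euc 2 => 2 * k^2 * y i) ((2*k^2) • P i) x :=
    (hP i x).const_mul (2*k^2)
  exact h1.mul h2

lemma pd2_v (k : ℝ) (i : Fin 2) (x : Euc 2) :
    pdR 2 i (pdR 2 i (v k)) x
      = F (da a) (q k x) * (2*k^2)
        + (2*k^2*x i) * (F (da (da a)) (q k x) * (2*k^2*x i)) := by
  rw [pd_v]
  rw [pdR, (hw k i x).fderiv]
  simp [Lc_app, P, EuclideanSpace.single_apply, Lc]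
  fin_cases i <;> simp [EuclideanSpace.single_apply] <;> ring

lemma helmholtz (k : ℝ) (x : Euc 2) : lapl 2 (v k) x + k^2 * v k x = 0 := by
  rw [lapl, Fin.sum_univ_two, pd2_v, pd2_v, v]
  have hu : k^2 * (x 0 * x 0 + x 1 * x 1) = q k x := rfl
  have h := ode (q k x)
  linear_combination k^2 * h + (4 * k^2 * F (da (da a)) (q k x)) * hu

lemma contDiff_v (k : ℝ) : ContDiff ℝ (⊤ : WithTop ℕ∞) (v k) := by
  have h0 : ContDiff ℝ (⊤ : WithTop ℕ∞) (fun y : Euc 2 => y 0) := (P 0).contDiff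
  have h1 : ContDiff ℝ (⊤ : WithTop ℕ∞) (fun y : Euc 2 => y 1) := (P 1).contDiff
  have hq' : ContDiff ℝ (⊤ : WithTop ℕ∞) (q k) :=
    contDiff_const.mul ((h0.mul h0).add (h1.mul h1))
  exact contDiff_F_a.comp hq'

/-! ### Geometry: values on spheres, Hausdorff measure of circles -/

lemma normsq (x : Euc 2) : ‖x‖^2 = x 0 * x 0 + x 1 * x 1 := by
  rw [EuclideanSpace.norm_eq, Real.sq_sqrt (by positivity)]
  simp [Fin.sum_univ_two, Real.norm_eq_abs, sq_abs, sq]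

lemma v_on_sphere {k R : ℝ} {x : Euc 2} (hx : x ∈ sphere (0 : Euc 2) R) :
    v k x = F a (k^2 * R^2) := by
  rw [mem_sphere_zero_iff_norm] at hx
  rw [v, q, ← normsq, hx]

lemma le_of_sq_le_sq {x y : ℝ} (hy : 0 ≤ y) (h : x^2 ≤ y^2) (hx : 0 ≤ x) : x ≤ y := by
  nlinarith

def pt (s t : ℝ) : Euc 2 := (WithLp.equiv 2 (Fin 2 → ℝ)).symm ![s, t]

@[simp] lemma pt_app0 (s t : ℝ) : pt s t 0 = s := rfl
@[simp] lemma pt_app1 (s t : ℝ) : pt s t 1 = t := rfl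

lemma norm_pt (s t : ℝ) : ‖pt s t‖^2 = s^2 + t^2 := by
  rw [normsq]; simp [sq]

lemma sphere_lower {R : ℝ} (hR : 0 < R) : surf2 (sphere (0 : Euc 2) R) ≠ 0 := by
  intro hzero
  have hlip : LipschitzWith 1 (fun x : Euc 2 => x 0) := by
    apply LipschitzWith.of_dist_le_mul
    intro x y
    rw [NNReal.coe_one, one_mul, Real.dist_eq, dist_eq_norm]
    have h1 : |x 0 - y 0|^2 ≤ ‖x - y‖^2 := by
      rw [normsq]
      have e0 : (x - y) 0 = x 0 - y 0 := rfl
      have e1 : (x - y) 1 = x 1 - y 1 := rfl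
      rw [e0, e1, sq_abs]
      nlinarith [sq_nonneg (x 1 - y 1)]
    exact le_of_sq_le_sq (norm_nonneg _) h1 (abs_nonneg _)
  have hsub : Set.Icc (-R) R ⊆ (fun x : Euc 2 => x 0) '' sphere (0 : Euc 2) R := by
    intro t ht
    obtain ⟨ht1, ht2⟩ := ht
    refine ⟨pt t (Real.sqrt (R^2 - t^2)), ?_, rfl⟩
    rw [mem_sphere_zero_iff_norm]
    have hRt : 0 ≤ R^2 - t^2 := by nlinarith
    have h2 : ‖pt t (Real.sqrt (R^2 - t^2))‖^2 = R^2 := by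
      rw [norm_pt, Real.sq_sqrt hRt]; ring
    rw [← Real.sqrt_sq (norm_nonneg _), h2, Real.sqrt_sq hR.le]
  have hmono : (μH[(1:ℝ)] : Measure ℝ) (Set.Icc (-R) R)
      ≤ μH[(1:ℝ)] ((fun x : Euc 2 => x 0) '' sphere (0 : Euc 2) R) :=
    measure_mono hsub
  have himg : μH[(1:ℝ)] ((fun x : Euc 2 => x 0) '' sphere (0 : Euc 2) R)
      ≤ (1:ℝ≥0) ^ (1:ℝ) * μH[(1:ℝ)] (sphere (0 : Euc 2) R) :=
    hlip.hausdorffMeasure_image_le (by norm_num) _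
  rw [MeasureTheory.hausdorffMeasure_real] at hmono himg
  rw [Real.volume_Icc] at hmono
  rw [show μH[(1:ℝ)] (sphere (0 : Euc 2) R) = surf2 (sphere (0 : Euc 2) R) from rfl,
    hzero, mul_zero] at himg
  have hzz : ENNReal.ofReal (R - -R) = 0 := le_antisymm (hmono.trans himg) zero_le
  rw [ENNReal.ofReal_eq_zero] at hzz
  linarith

open Real in
lemma sphere_upper {R : ℝ} (hR : 0 < R) : surf2 (sphere (0 : Euc 2) R) ≠ ⊤ := by
  set φ : ℝ → Euc 2 := fun t => pt (R * Real.cos t) (R * Real.sin t) with hφ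
  have hlip : LipschitzWith R.toNNReal φ := by
    apply LipschitzWith.of_dist_le_mul
    intro s t
    rw [dist_eq_norm, Real.dist_eq, Real.coe_toNNReal _ hR.le]
    have hsq : ‖φ s - φ t‖^2 ≤ (R * |s - t|)^2 := by
      have e0 : (φ s - φ t) 0 = R * Real.cos s - R * Real.cos t := rfl
      have e1 : (φ s - φ t) 1 = R * Real.sin s - R * Real.sin t := rfl
      rw [normsq, e0, e1]
      have expand : (Real.cos s - Real.cos t)^2 + (Real.sin s - Real.sin t)^2
          = 2 - 2 * Real.cos (s - t) := by
        rw [Real.cos_sub]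
        have h1 := Real.sin_sq_add_cos_sq s
        have h2 := Real.sin_sq_add_cos_sq t
        ring_nf
        nlinarith [h1, h2]
      have hb : 2 - 2 * Real.cos (s - t) ≤ (s - t)^2 := by
        have := Real.one_sub_sq_div_two_le_cos (x := s - t)
        linarith
      calc (R * Real.cos s - R * Real.cos t) * (R * Real.cos s - R * Real.cos t)
            + (R * Real.sin s - R * Real.sin t) * (R * Real.sin s - R * Real.sin t)
          = R^2 * ((Real.cos s - Real.cos t)^2 + (Real.sin s - Real.sin t)^2) := by ring
        _ = R^2 * (2 - 2 * Real.cos (s - t)) := by rw [expand]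
        _ ≤ R^2 * (s - t)^2 := by nlinarith [sq_nonneg R]
        _ = (R * |s - t|)^2 := by rw [mul_pow, sq_abs]
    exact le_of_sq_le_sq (by positivity) hsq (norm_nonneg _)
  have hcover : sphere (0 : Euc 2) R ⊆ φ '' Set.Icc (-π) π := by
    intro x hx
    rw [mem_sphere_zero_iff_norm] at hx
    set z : ℂ := Complex.mk (x 0) (x 1) with hz
    have hnormz : ‖z‖ = R := by
      rw [Complex.norm_def, Complex.normSq_mk]
      rw [← hx, ← Real.sqrt_sq (norm_nonneg x), normsq]
    have hzne : z ≠ 0 := by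
      intro h0
      rw [h0, norm_zero] at hnormz
      linarith
    refine ⟨z.arg, ?_, ?_⟩
    · have harg := Complex.arg_mem_Ioc z
      exact ⟨harg.1.le, harg.2⟩
    · have hcos : Real.cos z.arg = x 0 / R := by rw [Complex.cos_arg hzne, hnormz, hz]
      have hsin : Real.sin z.arg = x 1 / R := by rw [Complex.sin_arg, hnormz, hz]
      have h0 : φ z.arg 0 = x 0 := by
        rw [hφ]; simp only [pt_app0]; rw [hcos]; field_simp
      have h1 : φ z.arg 1 = x 1 := by
        rw [hφ]; simp only [pt_app1]; rw [hsin]; field_simp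
      ext i
      fin_cases i
      · exact h0
      · exact h1
  intro htop
  have h1 : surf2 (sphere (0 : Euc 2) R) ≤ μH[(1:ℝ)] (φ '' Set.Icc (-π) π) :=
    measure_mono hcover
  have h2 : μH[(1:ℝ)] (φ '' Set.Icc (-π) π)
      ≤ (R.toNNReal : ℝ≥0∞) ^ (1:ℝ) * μH[(1:ℝ)] (Set.Icc (-π) π) :=
    hlip.hausdorffMeasure_image_le (by norm_num) _
  rw [MeasureTheory.hausdorffMeasure_real, Real.volume_Icc] at h2
  have hfin : (R.toNNReal : ℝ≥0∞) ^ (1:ℝ) * ENNReal.ofReal (π - -π) ≠ ⊤ := by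
    apply ENNReal.mul_ne_top
    · simp [ENNReal.rpow_one]
    · exact ENNReal.ofReal_ne_top
  have h3 := h1.trans h2
  rw [htop] at h3
  exact hfin (top_le_iff.1 h3)

end Stmt10Aux

/-- for every `k > 0` there are radii `0 < R₁ < R₂ < R₃` and a
nonzero smooth solution `v` of `Δv + k²v = 0` in `B_{R₃} ⊂ ℝ²` vanishing
identically on `∂B_{R₁}` but not on `∂B_{R₂}` (e.g. `v = J_n(k|x|)e^{inθ}` with
`J_n(kR₁) = 0 ≠ J_n(kR₂)`); consequently, neither the `L^∞` nor the `L²`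
three spheres inequality can hold for all choices of `0 < R₁ < R₂ < R₃`. -/
theorem stmt_10 (k : ℝ) (hk : 0 < k) :
    (∃ R₁ R₂ R₃ : ℝ, 0 < R₁ ∧ R₁ < R₂ ∧ R₂ < R₃ ∧
      ∃ v : Euc 2 → ℝ, ContDiff ℝ (⊤ : ℕ∞) v ∧
        (∃ x ∈ ball (0 : Euc 2) R₃, v x ≠ 0) ∧
        (∀ x ∈ ball (0 : Euc 2) R₃, lapl 2 v x + k ^ 2 * v x = 0) ∧
        (∀ x ∈ sphere (0 : Euc 2) R₁, v x = 0) ∧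
        (∃ x ∈ sphere (0 : Euc 2) R₂, v x ≠ 0)) ∧
    (∀ C α : ℝ, 0 < C → α ∈ Set.Ioo (0 : ℝ) 1 →
      ¬ (∀ R₁ R₂ R₃ : ℝ, 0 < R₁ → R₁ < R₂ → R₂ < R₃ →
        ∀ v : Euc 2 → ℝ, ContDiff ℝ (⊤ : ℕ∞) v →
          (∀ x ∈ ball (0 : Euc 2) R₃, lapl 2 v x + k ^ 2 * v x = 0) →
          supNorm R₂ v ≤ C * supNorm R₁ v ^ α * supNorm R₃ v ^ (1 - α))) ∧
    (∀ C α : ℝ, 0 < C → α ∈ Set.Ioo (0 : ℝ) 1 →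
      ¬ (∀ R₁ R₂ R₃ : ℝ, 0 < R₁ → R₁ < R₂ → R₂ < R₃ →
        ∀ v : Euc 2 → ℝ, ContDiff ℝ (⊤ : ℕ∞) v →
          (∀ x ∈ ball (0 : Euc 2) R₃, lapl 2 v x + k ^ 2 * v x = 0) →
          l2Norm R₂ v ≤ C * l2Norm R₁ v ^ α * l2Norm R₃ v ^ (1 - α))) := by
  classical
  open Stmt10Aux in
  -- the zero `u₁` of `f` via the intermediate value theorem
  have hdiff : Differentiable ℝ (F a) := fun u => (hasDerivAt_F adm_a u).differentiableAt
  have hcont : Continuous (F a) := hdiff.continuous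
  have hIVT := intermediate_value_Icc' (by norm_num : (0:ℝ) ≤ 8) hcont.continuousOn
  have h0mem : (0:ℝ) ∈ Set.Icc (F a 8) (F a 0) := by
    constructor
    · exact F_a_eight.le
    · rw [F_a_zero]; norm_num
  obtain ⟨u₁, hu₁mem, hu₁⟩ := hIVT h0mem
  have hu₁pos : 0 < u₁ := by
    rcases lt_or_eq_of_le hu₁mem.1 with h | h
    · exact h
    · exfalso; rw [← h, F_a_zero] at hu₁; norm_num at hu₁
  have hu₁lt : u₁ < 8 := by
    rcases lt_or_eq_of_le hu₁mem.2 with h | h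
    · exact h
    · exfalso; rw [h] at hu₁; have h8 := F_a_eight; rw [hu₁] at h8; norm_num at h8
  set R₁ : ℝ := Real.sqrt u₁ / k with hR₁def
  set R₂ : ℝ := Real.sqrt 8 / k with hR₂def
  set R₃ : ℝ := R₂ + 1 with hR₃def
  have hR₁pos : 0 < R₁ := div_pos (Real.sqrt_pos.2 hu₁pos) hk
  have hR₂pos : 0 < R₂ := div_pos (Real.sqrt_pos.2 (by norm_num)) hk
  have hR₁₂ : R₁ < R₂ := by
    rw [hR₁def, hR₂def]
    gcongr
  have hR₂₃ : R₂ < R₃ := lt_add_one R₂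
  have hR₃pos : 0 < R₃ := hR₂pos.trans hR₂₃
  have hkR₁ : k^2 * R₁^2 = u₁ := by
    rw [hR₁def, div_pow, Real.sq_sqrt hu₁pos.le]
    field_simp
  have hkR₂ : k^2 * R₂^2 = 8 := by
    rw [hR₂def, div_pow, Real.sq_sqrt (by norm_num : (0:ℝ) ≤ 8)]
    field_simp
  set vv : Euc 2 → ℝ := Stmt10Aux.v k with hvvdef
  have hsmooth : ContDiff ℝ (⊤ : ℕ∞) vv := (contDiff_v k).of_le le_top
  have hvz : ∀ x ∈ sphere (0 : Euc 2) R₁, vv x = 0 := by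
    intro x hx
    rw [hvvdef, v_on_sphere hx, hkR₁, hu₁]
  have hv8 : ∀ x ∈ sphere (0 : Euc 2) R₂, vv x = F a 8 := by
    intro x hx
    rw [hvvdef, v_on_sphere hx, hkR₂]
  set x₂ : Euc 2 := EuclideanSpace.single 0 R₂ with hx₂def
  have hx₂ : x₂ ∈ sphere (0 : Euc 2) R₂ := by
    rw [mem_sphere_zero_iff_norm, hx₂def, EuclideanSpace.norm_single, Real.norm_eq_abs,
      abs_of_pos hR₂pos]
  have hvx₂ : vv x₂ ≠ 0 := by
    rw [hv8 x₂ hx₂]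
    exact F_a_eight.ne
  have hv0 : vv (0 : Euc 2) = 1 := by
    have hq0 : q k (0 : Euc 2) = 0 := by simp [q]
    rw [hvvdef, Stmt10Aux.v, hq0, F_a_zero]
  have hzball : (0 : Euc 2) ∈ ball (0 : Euc 2) R₃ := mem_ball_self hR₃pos
  have hhelm : ∀ x ∈ ball (0 : Euc 2) R₃, lapl 2 vv x + k ^ 2 * vv x = 0 :=
    fun x _ => helmholtz k x
  -- sup/L² norm computations
  have hsp₁ne : (sphere (0 : Euc 2) R₁).Nonempty := by
    refine ⟨EuclideanSpace.single 0 R₁, ?_⟩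
    rw [mem_sphere_zero_iff_norm, EuclideanSpace.norm_single, Real.norm_eq_abs,
      abs_of_pos hR₁pos]
  have hsup1 : supNorm R₁ vv = 0 := by
    rw [supNorm,
      Set.image_congr (g := fun _ => (0:ℝ)) (fun x hx => by rw [hvz x hx, abs_zero]),
      hsp₁ne.image_const]
    exact csSup_singleton 0
  have hsup2 : 0 < supNorm R₂ vv := by
    have hb : BddAbove ((fun x => |vv x|) '' sphere (0 : Euc 2) R₂) :=
      (isCompact_sphere (0 : Euc 2) R₂).bddAbove_image
        (hsmooth.continuous.abs.continuousOn)
    have hle : |vv x₂| ≤ supNorm R₂ vv := le_csSup hb ⟨x₂, hx₂, rfl⟩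
    have hpos : 0 < |vv x₂| := abs_pos.2 hvx₂
    linarith
  have hl21 : l2Norm R₁ vv = 0 := by
    rw [l2Norm,
      setIntegral_congr_fun (g := fun _ => (0:ℝ)) isClosed_sphere.measurableSet
        (fun x hx => by simp [hvz x hx]),
      integral_zero, Real.sqrt_zero]
  have hl22 : 0 < l2Norm R₂ vv := by
    rw [l2Norm,
      setIntegral_congr_fun (g := fun _ => (F a 8)^2) isClosed_sphere.measurableSet
        (fun x hx => by rw [hv8 x hx]),
      setIntegral_const, smul_eq_mul]
    apply Real.sqrt_pos.2
    exact mul_pos (ENNReal.toReal_pos (sphere_lower hR₂pos) (sphere_upper hR₂pos))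
      (pow_two_pos_of_ne_zero F_a_eight.ne)
  refine ⟨⟨R₁, R₂, R₃, hR₁pos, hR₁₂, hR₂₃, vv, hsmooth,
      ⟨0, hzball, by simp [hv0]⟩, hhelm, hvz, ⟨x₂, hx₂, hvx₂⟩⟩, ?_, ?_⟩
  · intro C α hC hα H
    have hineq := H R₁ R₂ R₃ hR₁pos hR₁₂ hR₂₃ vv hsmooth hhelm
    rw [hsup1, Real.zero_rpow hα.1.ne', mul_zero, zero_mul] at hineq
    linarith
  · intro C α hC hα H
    have hineq := H R₁ R₂ R₃ hR₁pos hR₁₂ hR₂₃ vv hsmooth hhelm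
    rw [hl21, Real.zero_rpow hα.1.ne', mul_zero, zero_mul] at hineq
    linarith

end
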